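/- For the dual update λ_{t+1} = [λ_t + η(y_t − βλ_t)]_+ with 0 < βη < 1/2, for any λ ∈ ℝ^m_{≥0} it holds that ‖λ_{t+1} − λ‖² ≤ ‖λ_t − λ‖² + 2η‖λ_t‖‖y_t‖ − 2η⟨λ, y_t⟩ + ηβ‖λ‖² + 2η²‖y_t‖². -/

import Mathlib

/-!
Since `λ ≥ 0`, the projection `[·]_+` can only bring the iterate closer to `λ`, so it suffices to
bound `‖(λ_t - λ) + η (y_t - β λ_t)‖²`. Expanding, Cauchy–Schwarz handles `⟨λ_t, y_t⟩`,
`2⟨λ, λ_t⟩ ≤ ‖λ‖² + ‖λ_t‖²` handles the cross term, and `‖y_t - β λ_t‖² ≤ 2‖y_t‖² + 2β²‖λ_t‖²`;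
what remains is `ηβ (2βη - 1) ‖λ_t‖² ≤ 0`, which is where `βη ≤ 1/2` enters.
-/

open scoped RealInnerProductSpace

/-- Componentwise positive part (Euclidean projection onto the nonnegative orthant). -/
noncomputable def posPart {m : ℕ} (z : EuclideanSpace ℝ (Fin m)) :
    EuclideanSpace ℝ (Fin m) := WithLp.toLp 2 (fun i => max (z i) 0)

theorem norm_posPart_sub_le {m : ℕ} (z l : EuclideanSpace ℝ (Fin m)) (hl : ∀ i, 0 ≤ l i) :
    ‖posPart z - l‖ ≤ ‖z - l‖ := by
  rw [EuclideanSpace.norm_eq, EuclideanSpace.norm_eq]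
  gcongr with i
  have := abs_max_sub_max_le_abs (z i) (l i) 0
  rw [max_eq_left (hl i)] at this
  exact this

section InnerProductSpace

variable {E : Type*} [NormedAddCommGroup E] [InnerProductSpace ℝ E]

theorem norm_sub_sq_le_two_mul (x y : E) : ‖x - y‖ ^ 2 ≤ 2 * ‖x‖ ^ 2 + 2 * ‖y‖ ^ 2 := by
  nlinarith [parallelogram_law_with_norm ℝ x y, mul_self_nonneg ‖x + y‖]

theorem two_mul_real_inner_le_norm_sq_add (x y : E) : 2 * ⟪x, y⟫ ≤ ‖x‖ ^ 2 + ‖y‖ ^ 2 := by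
  nlinarith [norm_sub_sq_real x y, sq_nonneg ‖x - y‖]

theorem norm_add_smul_sub_smul_sub_sq_le {η β : ℝ} (lam y l : E)
    (hη : 0 ≤ η) (hβ : 0 ≤ β) (hβη : β * η ≤ 1 / 2) :
    ‖lam + η • (y - β • lam) - l‖ ^ 2 ≤
      ‖lam - l‖ ^ 2 + 2 * η * ‖lam‖ * ‖y‖ - 2 * η * ⟪l, y⟫
        + η * β * ‖l‖ ^ 2 + 2 * η ^ 2 * ‖y‖ ^ 2 := by
  have expand : ‖lam + η • (y - β • lam) - l‖ ^ 2 = ‖lam - l‖ ^ 2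
      + 2 * η * (⟪lam, y⟫ - β * ‖lam‖ ^ 2 - ⟪l, y⟫ + β * ⟪l, lam⟫)
      + η ^ 2 * ‖y - β • lam‖ ^ 2 := by
    rw [show lam + η • (y - β • lam) - l = (lam - l) + η • (y - β • lam) by abel,
      norm_add_sq_real, norm_smul, Real.norm_of_nonneg hη, inner_smul_right, inner_sub_left,
      inner_sub_right, inner_sub_right, inner_smul_right, inner_smul_right,
      real_inner_self_eq_norm_sq]
    ring
  have cauchy_schwarz : ⟪lam, y⟫ ≤ ‖lam‖ * ‖y‖ := real_inner_le_norm lam y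
  have cross : 2 * ⟪l, lam⟫ ≤ ‖l‖ ^ 2 + ‖lam‖ ^ 2 := two_mul_real_inner_le_norm_sq_add l lam
  have drift_sq : ‖y - β • lam‖ ^ 2 ≤ 2 * ‖y‖ ^ 2 + 2 * β ^ 2 * ‖lam‖ ^ 2 := by
    simpa [norm_smul, Real.norm_of_nonneg hβ, mul_pow, mul_assoc] using
      norm_sub_sq_le_two_mul y (β • lam)
  rw [expand]
  linear_combination (2 * η) * cauchy_schwarz + (η * β) * cross + η ^ 2 * drift_sq
    + (2 * η * β * ‖lam‖ ^ 2) * hβη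

end InnerProductSpace

theorem dual_update_one_step_general
    {m : ℕ} (lam y l : EuclideanSpace ℝ (Fin m)) (η β : ℝ)
    (hη : 0 < η) (hβ : 0 < β) (hβη : β * η < 1 / 2)
    (hl : ∀ i, 0 ≤ l i) :
    ‖posPart (lam + η • (y - β • lam)) - l‖ ^ 2 ≤
      ‖lam - l‖ ^ 2 + 2 * η * ‖lam‖ * ‖y‖ - 2 * η * ⟪l, y⟫
        + η * β * ‖l‖ ^ 2 + 2 * η ^ 2 * ‖y‖ ^ 2 :=
  (pow_le_pow_left₀ (norm_nonneg _) (norm_posPart_sub_le _ l hl) 2).trans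
    (norm_add_smul_sub_smul_sub_sq_le lam y l hη.le hβ.le hβη.le)

theorem dual_update_one_step
    {m : ℕ} (lam y l : EuclideanSpace ℝ (Fin m)) (η β : ℝ)
    (hη : 0 < η) (hβ : 0 < β) (hβη : β * η < 1 / 2)
    (hlam : ∀ i, 0 ≤ lam i) (hl : ∀ i, 0 ≤ l i) :
    ‖posPart (lam + η • (y - β • lam)) - l‖ ^ 2 ≤
      ‖lam - l‖ ^ 2 + 2 * η * ‖lam‖ * ‖y‖ - 2 * η * ⟪l, y⟫
        + η * β * ‖l‖ ^ 2 + 2 * η ^ 2 * ‖y‖ ^ 2 :=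
  dual_update_one_step_general lam y l η β hη hβ hβη hl
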